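/- Entropy merging bound: if p' is obtained from the concatenation r of q̃_2 (typical flow after the two-step walk) and the leaked distribution p̂', by merging at most load_M·k + 1 entries of r per vertex, then H(p') ≥ H(q̃_2) + H(p̂') − log(load_M·k + 1). -/

import Mathlib

open Finset

/-- Entropy of a single value, `H(u) = -u * log u` (natural logarithm). -/
noncomputable def Hf (u : ℝ) : ℝ := -u * Real.log u

/-!
Merging a block of `n ≤ m` nonnegative masses with total `s` loses at most `s log m` of
entropy: by concavity of `-x log x` (Jensen with uniform weights),
`∑ H(xᵢ) ≤ n · H(s / n) = H(s) + s log n`. Summed over the blocks this costs at most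
`‖r‖ log m ≤ log m`, and the entropy of a concatenation is the sum of the entropies.
-/

open Real

lemma Hf_eq_negMulLog : Hf = negMulLog := rfl

lemma sum_negMulLog_le_negMulLog_sum_add_mul_log_card {α : Type*} (s : Finset α) (x : α → ℝ)
    (hx : ∀ i ∈ s, 0 ≤ x i) :
    ∑ i ∈ s, negMulLog (x i) ≤ negMulLog (∑ i ∈ s, x i) + (∑ i ∈ s, x i) * log #s := by
  rcases s.eq_empty_or_nonempty with rfl | hs
  · simp
  set n : ℝ := (#s : ℝ)
  have hn : 0 < n := by simpa [n] using hs.card_pos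
  have jensen : ∑ i ∈ s, n⁻¹ • negMulLog (x i) ≤ negMulLog (∑ i ∈ s, n⁻¹ • x i) :=
    concaveOn_negMulLog.le_map_sum (fun _ _ => by positivity)
      (by simp [n, hn.ne']) (fun i hi => Set.mem_Ici.mpr (hx i hi))
  rw [← smul_sum, ← smul_sum, smul_eq_mul, smul_eq_mul, mul_comm n⁻¹, negMulLog_mul,
    negMulLog, log_inv] at jensen
  have key := mul_le_mul_of_nonneg_left jensen hn.le
  field_simp at key
  linarith

lemma sum_negMulLog_le_sum_negMulLog_fiberwise_add_mul_log {α V : Type*} [Fintype α]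
    [Fintype V] [DecidableEq V] (f : α → V) (r : α → ℝ) (hr : ∀ x, 0 ≤ r x) (m : ℝ)
    (hfiber : ∀ v, (#{x | f x = v} : ℝ) ≤ m) :
    ∑ x, negMulLog (r x) ≤ ∑ v, negMulLog (∑ x with f x = v, r x) + (∑ x, r x) * log m := by
  have block (v : V) : ∑ x with f x = v, negMulLog (r x)
      ≤ negMulLog (∑ x with f x = v, r x) + (∑ x with f x = v, r x) * log m := by
    refine (sum_negMulLog_le_negMulLog_sum_add_mul_log_card _ r fun x _ => hr x).trans ?_
    rcases (#{x | f x = v}).eq_zero_or_pos with h | h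
    · simp [card_eq_zero.mp h]
    gcongr
    · exact sum_nonneg fun x _ => hr x
    · exact hfiber v
  calc ∑ x, negMulLog (r x) = ∑ v, ∑ x with f x = v, negMulLog (r x) :=
        (sum_fiberwise univ f _).symm
    _ ≤ ∑ v, (negMulLog (∑ x with f x = v, r x) + (∑ x with f x = v, r x) * log m) :=
        sum_le_sum fun v _ => block v
    _ = _ := by rw [sum_add_distrib, ← sum_mul, sum_fiberwise univ f r]

/-- Entropy merging bound: if `p'` is obtained from the concatenation `r` of
`q̃₂` (typical flow after the two-step walk) and the leaked distribution `p̂'`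
by merging, per vertex, at most `loadM·k + 1` entries of `r`, then
`H(p') ≥ H(q̃₂) + H(p̂') − log(loadM·k + 1)`. -/
theorem entropy_merging_bound {ι κ V : Type*} [Fintype ι] [Fintype κ]
    [Fintype V] [DecidableEq V]
    (q2 : ι → ℝ) (phat' : κ → ℝ) (loadM k : ℕ)
    (r : ι ⊕ κ → ℝ) (hr : r = Sum.elim q2 phat')
    (hr0 : ∀ x, 0 ≤ r x) (hr1 : ∑ x, r x ≤ 1)
    (f : ι ⊕ κ → V)
    (hfiber : ∀ v, (univ.filter (fun x => f x = v)).card ≤ loadM * k + 1)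
    (p' : V → ℝ)
    (hp' : ∀ v, p' v = ∑ x ∈ univ.filter (fun x => f x = v), r x) :
    (∑ i, Hf (q2 i)) + (∑ j, Hf (phat' j)) - Real.log ((loadM : ℝ) * k + 1)
      ≤ ∑ v, Hf (p' v) := by
  set γ : ℝ := (loadM : ℝ) * k + 1
  have hconcat : ∑ x, Hf (r x) = (∑ i, Hf (q2 i)) + (∑ j, Hf (phat' j)) := by
    simp [hr, Fintype.sum_sum_type]
  have hmerge : ∑ x, Hf (r x) ≤ ∑ v, Hf (p' v) + (∑ x, r x) * log γ := by
    simp only [hp', Hf_eq_negMulLog]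
    exact sum_negMulLog_le_sum_negMulLog_fiberwise_add_mul_log f r hr0 γ
      fun v => by simp only [γ]; exact_mod_cast hfiber v
  have hloss : (∑ x, r x) * log γ ≤ log γ :=
    mul_le_of_le_one_left (log_nonneg (by simp [γ]; positivity)) hr1
  linarith
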